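/- arXiv:0909.2441 — 8 statements merged into one kernel-verified Lean document; each statement's English description precedes it below -/
import Mathlib

section
/- Let V be a nonzero finite-dimensional vector space over an algebraically closed field with a nondegenerate symplectic form (,), and let A ∈ End(V) be nilpotent with (Ax, x) = 0 for all x (i.e., the bilinear form (x,y) ↦ (Ax,y) is alternating). Then the kernel of A has even dimension, and in particular dim ker A ≥ 2. -/
/-!
The form `C x y = B (A x) y` is alternating, and since `B` is nondegenerate its kernel is
`ker A`. A nondegenerate alternating form only exists on an even-dimensional space: split off
the hyperbolic plane `span {x, y}` with `B x y ≠ 0` and induct on its orthogonal complement.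
Applied to `B` on `V` and to `C` on a complement of its kernel, this shows that `dim V` and
`dim V - dim ker A` are even. Nilpotency makes `ker A` nonzero, hence of dimension at least 2.
-/

open Module Submodule

theorem LinearMap.ker_ne_bot_of_isNilpotent {K V : Type*} [Field K] [AddCommGroup V] [Module K V]
    [FiniteDimensional K V] [Nontrivial V] {f : Module.End K V} (hf : IsNilpotent f) :
    LinearMap.ker f ≠ ⊥ :=
  fun h ↦ hf.not_isUnit ((LinearMap.isUnit_iff_ker_eq_bot f).mpr h)

namespace LinearMap.BilinForm

theorem restrict_nondegenerate_of_isCompl_ker {R M : Type*} [CommRing R] [AddCommGroup M]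
    [Module R M] {B : LinearMap.BilinForm R M} (hB : B.IsRefl) {W : Submodule R M}
    (hW : IsCompl W (LinearMap.ker B)) : (B.restrict W).Nondegenerate := by
  have hW_ortho_ker : ∀ x ∈ W, ∀ y ∈ LinearMap.ker B, B x y = 0 :=
    fun x _ y hy ↦ hB y x (by rw [LinearMap.mem_ker.mp hy, LinearMap.zero_apply])
  refine (IsRefl.nondegenerate_iff_separatingLeft (B := B.restrict W) fun x y ↦ hB x y).mpr ?_
  rw [separatingLeft_iff_ker_eq_bot, ker_restrict_eq_of_codisjoint hW.codisjoint hW_ortho_ker]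
  exact disjoint_iff_comap_eq_bot.mp hW.disjoint

section Field

variable {K V : Type*} [Field K] [AddCommGroup V] [Module K V] {B : LinearMap.BilinForm K V}

theorem IsAlt.eq_zero_of_apply_smul_add_smul_eq_zero (hB : B.IsAlt) {x y : V} (hxy : B x y ≠ 0)
    {a b : K} (hx : B (a • x + b • y) x = 0) (hy : B (a • x + b • y) y = 0) :
    a = 0 ∧ b = 0 := by
  simp only [map_add, map_smul, LinearMap.add_apply, LinearMap.smul_apply, smul_eq_mul,
    hB.self_eq_zero, mul_zero, zero_add, add_zero, ← hB.neg_eq x y, mul_neg, neg_eq_zero,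
    mul_eq_zero] at hx hy
  exact ⟨hy.resolve_right hxy, hx.resolve_right hxy⟩

theorem IsAlt.linearIndependent_pair (hB : B.IsAlt) {x y : V} (hxy : B x y ≠ 0) :
    LinearIndependent K ![x, y] :=
  LinearIndependent.pair_iff.mpr fun _ _ h ↦
    hB.eq_zero_of_apply_smul_add_smul_eq_zero hxy (by simp [h]) (by simp [h])

theorem IsAlt.finrank_span_pair (hB : B.IsAlt) {x y : V} (hxy : B x y ≠ 0) :
    finrank K (span K {x, y}) = 2 := by
  rw [← Matrix.range_cons_cons_empty x y ![],
    finrank_span_eq_card (hB.linearIndependent_pair hxy), Fintype.card_fin]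

theorem IsAlt.restrict_span_pair_nondegenerate (hB : B.IsAlt) {x y : V} (hxy : B x y ≠ 0) :
    (B.restrict (span K {x, y})).Nondegenerate := by
  refine (IsRefl.nondegenerate_iff_separatingLeft (B := B.restrict _)
    fun _ _ ↦ hB.isRefl _ _).mpr ?_
  rintro ⟨z, hz⟩ hz_ortho
  obtain ⟨a, b, rfl⟩ := mem_span_pair.mp hz
  obtain ⟨rfl, rfl⟩ := hB.eq_zero_of_apply_smul_add_smul_eq_zero hxy
    (hz_ortho ⟨x, subset_span (by simp)⟩) (hz_ortho ⟨y, subset_span (by simp)⟩)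
  ext
  simp

theorem IsAlt.even_finrank [FiniteDimensional K V] (hB : B.IsAlt) (hnd : B.Nondegenerate) :
    Even (finrank K V) := by
  induction hn : finrank K V using Nat.strong_induction_on generalizing V with
  | _ n ih =>
    obtain hV | hV := subsingleton_or_nontrivial V
    · rw [← hn, finrank_zero_of_subsingleton]
      exact .zero
    obtain ⟨x, hx⟩ := exists_ne (0 : V)
    obtain ⟨y, hxy⟩ : ∃ y, B x y ≠ 0 := by
      by_contra! h
      exact hx (hnd.1 x h)
    set W := span K {x, y}
    have hW : (B.restrict W).Nondegenerate := hB.restrict_span_pair_nondegenerate hxy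
    have hWperp : (B.restrict (B.orthogonal W)).Nondegenerate := by
      rw [restrict_nondegenerate_iff_isCompl_orthogonal hB.isRefl,
        orthogonal_orthogonal hnd hB.isRefl]
      exact (isCompl_orthogonal_of_restrict_nondegenerate hB.isRefl hW).symm
    have hdim : finrank K W + finrank K (B.orthogonal W) = n :=
      hn ▸ finrank_add_eq_of_isCompl (isCompl_orthogonal_of_restrict_nondegenerate hB.isRefl hW)
    have hdimW : finrank K W = 2 := hB.finrank_span_pair hxy
    obtain ⟨m, hm⟩ := ih _ (by omega) (B := B.restrict _) (fun z ↦ hB z) hWperp rfl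
    exact ⟨m + 1, by omega⟩

theorem IsAlt.even_finrank_range [FiniteDimensional K V] (hB : B.IsAlt) :
    Even (finrank K (LinearMap.range B)) := by
  obtain ⟨W, hW⟩ := (LinearMap.ker B).exists_isCompl
  have hW_even : Even (finrank K W) :=
    IsAlt.even_finrank (B := B.restrict W) (fun z ↦ hB z)
      (restrict_nondegenerate_of_isCompl_ker hB.isRefl hW.symm)
  have h_range := B.finrank_range_add_finrank_ker
  have h_compl := finrank_add_eq_of_isCompl hW
  rwa [show finrank K (LinearMap.range B) = finrank K W by omega]

end Field

end LinearMap.BilinForm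

theorem ker_nilpotent_even_dim_general
    (k V : Type*) [Field k] [AddCommGroup V] [Module k V]
    [FiniteDimensional k V] (hV : Nontrivial V)
    (B : LinearMap.BilinForm k V) (halt : B.IsAlt) (hnd : B.Nondegenerate)
    (A : Module.End k V) (hnil : IsNilpotent A)
    (hAalt : ∀ x : V, B (A x) x = 0) :
    Even (Module.finrank k (LinearMap.ker A)) ∧
      2 ≤ Module.finrank k (LinearMap.ker A) := by
  let C : LinearMap.BilinForm k V := B ∘ₗ A
  have hC : C.IsAlt := hAalt
  have hker : LinearMap.ker C = LinearMap.ker A :=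
    LinearMap.ker_comp_of_ker_eq_bot A hnd.ker_eq_bot
  have h_rank_nullity := C.finrank_range_add_finrank_ker
  rw [hker] at h_rank_nullity
  obtain ⟨r, hr⟩ := hC.even_finrank_range
  obtain ⟨d, hd⟩ := halt.even_finrank hnd
  have hpos : 1 ≤ finrank k (LinearMap.ker A) :=
    one_le_finrank_iff.mpr (LinearMap.ker_ne_bot_of_isNilpotent hnil)
  exact ⟨⟨d - r, by omega⟩, by omega⟩

/-- Let `V` be a nonzero finite-dimensional vector space over an
algebraically closed field with a nondegenerate symplectic form `B`, and let
`A` be a nilpotent endomorphism of `V` with `B (A x) x = 0` for all `x`.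
Then `ker A` has even dimension; in particular `dim ker A ≥ 2`. -/
theorem ker_nilpotent_even_dim
    (k V : Type*) [Field k] [IsAlgClosed k] [AddCommGroup V] [Module k V]
    [FiniteDimensional k V] (hV : Nontrivial V)
    (B : LinearMap.BilinForm k V) (halt : B.IsAlt) (hnd : B.Nondegenerate)
    (A : Module.End k V) (hnil : IsNilpotent A)
    (hAalt : ∀ x : V, B (A x) x = 0) :
    Even (Module.finrank k (LinearMap.ker A)) ∧
      2 ≤ Module.finrank k (LinearMap.ker A) :=
  ker_nilpotent_even_dim_general k V hV B halt hnd A hnil hAalt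
end

section
/- Let k have characteristic 2, V a symplectic k-vector space with symplectic form (,), Q a quadratic form on V with associated endomorphism A = A_Q, and suppose V ≠ 0 and A is nilpotent. Define e as the smallest integer ≥ 1 with A^e = 0, and f as the smallest integer ≥ 0 with Q(A^f x) = 0 for all x ∈ V. Then e ≤ 2f + 1. -/
/-!
The polar form of `Q` is `B (A x) y`; being symmetric, while `B` is alternating and `-1 = 1`,
it makes `A` self-adjoint for `B`. Hence `B (A ^ (2f+1) x) y = B (A (A ^ f x)) (A ^ f y)` is the
polar form of `Q` at `(A ^ f x, A ^ f y)`, which vanishes since `Q ∘ A ^ f = 0`, and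
nondegeneracy of `B` gives `A ^ (2f+1) = 0`.
-/

namespace LinearMap

variable {R M : Type*} [CommRing R] [AddCommGroup M] [Module R M]
  {B : LinearMap.BilinForm R M} {Q : QuadraticForm R M} {A : Module.End R M}

theorem isSelfAdjoint_of_polar_eq [CharP R 2] (hB : B.IsAlt)
    (hA : ∀ x y, QuadraticMap.polar Q x y = B (A x) y) : B.IsSelfAdjoint A := fun x y => by
  rw [← hA, QuadraticMap.polar_comm, hA, ← hB.neg_eq, CharTwo.neg_eq]

theorem IsSelfAdjoint.pow (hA : B.IsSelfAdjoint A) (n : ℕ) : B.IsSelfAdjoint ⇑(A ^ n) := by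
  induction n with
  | zero => exact isAdjointPair_one
  | succ n ih =>
    have h := ih.mul hA
    rwa [← pow_succ, ← pow_succ'] at h

theorem pow_two_mul_add_one_eq_zero_of_polar_eq (hB : B.SeparatingLeft)
    (hA : ∀ x y, QuadraticMap.polar Q x y = B (A x) y) (hsa : B.IsSelfAdjoint A) {n : ℕ}
    (hQ : ∀ x, Q ((A ^ n) x) = 0) : A ^ (2 * n + 1) = 0 := by
  ext x
  refine hB _ fun y => ?_
  calc B ((A ^ (2 * n + 1)) x) y = B ((A ^ n) (A ((A ^ n) x))) y := by
        rw [← Module.End.mul_apply, ← Module.End.mul_apply, ← pow_succ, ← pow_add,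
          two_mul, add_right_comm]
    _ = QuadraticMap.polar Q ((A ^ n) x) ((A ^ n) y) := by rw [hsa.pow n, hA]
    _ = 0 := by rw [QuadraticMap.polar, ← map_add, hQ, hQ, hQ, sub_zero, sub_zero]

end LinearMap

theorem e_le_two_f_add_one_general
    (k V : Type*) [Field k] [CharP k 2] [AddCommGroup V] [Module k V]
    (B : LinearMap.BilinForm k V) (halt : B.IsAlt) (hnd : B.Nondegenerate)
    (Q : QuadraticForm k V) (A : Module.End k V)
    (hA : ∀ x y : V, Q (x + y) - Q x - Q y = B (A x) y)
    (e f : ℕ)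
    (hemin : ∀ m : ℕ, 1 ≤ m → A ^ m = 0 → e ≤ m)
    (hfQ : ∀ x : V, Q ((A ^ f) x) = 0) :
    e ≤ 2 * f + 1 :=
  hemin _ (Nat.le_add_left 1 _)
    (LinearMap.pow_two_mul_add_one_eq_zero_of_polar_eq hnd.1 hA
      (LinearMap.isSelfAdjoint_of_polar_eq halt hA) hfQ)

/-- char 2, `V ≠ 0` a symplectic space, `Q` a quadratic form with
nilpotent associated endomorphism `A`.  If `e ≥ 1` is minimal with `A^e = 0` and
`f ≥ 0` is minimal with `Q ∘ A^f = 0`, then `e ≤ 2f + 1`. -/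
theorem e_le_two_f_add_one
    (k V : Type*) [Field k] [CharP k 2] [AddCommGroup V] [Module k V]
    [FiniteDimensional k V] (hV : Nontrivial V)
    (B : LinearMap.BilinForm k V) (halt : B.IsAlt) (hnd : B.Nondegenerate)
    (Q : QuadraticForm k V) (A : Module.End k V)
    (hA : ∀ x y : V, Q (x + y) - Q x - Q y = B (A x) y)
    (hnil : IsNilpotent A)
    (e f : ℕ)
    (he1 : 1 ≤ e) (heA : A ^ e = 0)
    (hemin : ∀ m : ℕ, 1 ≤ m → A ^ m = 0 → e ≤ m)
    (hfQ : ∀ x : V, Q ((A ^ f) x) = 0)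
    (hfmin : ∀ m : ℕ, (∀ x : V, Q ((A ^ m) x) = 0) → f ≤ m) :
    e ≤ 2 * f + 1 :=
  e_le_two_f_add_one_general k V B halt hnd Q A hA e f hemin hfQ
end

section
/- Let k be a field of characteristic 2, V a symplectic k-vector space, Q a quadratic form on V with associated endomorphism A = A_Q, and n ≥ 0 an integer. Then for any x, y ∈ V, (A^{2n+1}x, y) = Q(A^n(x+y)) − Q(A^n x) − Q(A^n y); consequently, if Q∘A^n = 0 then A^{2n+1} = 0. -/
/-- char 2, `Q` a quadratic form on a symplectic space `V` with
associated endomorphism `A`.  For any `n ≥ 0` and `x, y ∈ V`,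
`B (A^{2n+1} x) y = Q (A^n (x+y)) - Q (A^n x) - Q (A^n y)`; consequently if
`Q ∘ A^n = 0` then `A^{2n+1} = 0`. -/
theorem polar_iterate_and_vanishing
    (k V : Type*) [Field k] [CharP k 2] [AddCommGroup V] [Module k V]
    [FiniteDimensional k V]
    (B : LinearMap.BilinForm k V) (halt : B.IsAlt) (hnd : B.Nondegenerate)
    (Q : QuadraticForm k V) (A : Module.End k V)
    (hA : ∀ x y : V, Q (x + y) - Q x - Q y = B (A x) y)
    (n : ℕ) :
    (∀ x y : V,
        B ((A ^ (2 * n + 1)) x) y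
          = Q ((A ^ n) (x + y)) - Q ((A ^ n) x) - Q ((A ^ n) y)) ∧
      ((∀ x : V, Q ((A ^ n) x) = 0) → A ^ (2 * n + 1) = 0) := by
  have hsa : ∀ x y : V, B (A x) y = B x (A y) := by
    intro x y
    have h1 := hA x y
    have h2 := hA y x
    rw [add_comm y x] at h2
    have h3 : B (A x) y = B (A y) x := by rw [← h1, ← h2]; ring
    rw [h3, ← LinearMap.IsAlt.neg halt x (A y), CharTwo.neg_eq]
  have hmove : ∀ (m : ℕ) (x y : V), B ((A ^ m) x) y = B x ((A ^ m) y) := by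
    intro m
    induction m with
    | zero => simp
    | succ m ih =>
      intro x y
      have hc : (A ^ m) (A y) = A ((A ^ m) y) := by
        rw [← Module.End.mul_apply, ← Module.End.mul_apply, ← pow_succ, pow_succ']
      rw [pow_succ', Module.End.mul_apply, hsa, ih, hc, ← Module.End.mul_apply,
        ← pow_succ']
  have main : ∀ x y : V,
      B ((A ^ (2 * n + 1)) x) y
        = Q ((A ^ n) (x + y)) - Q ((A ^ n) x) - Q ((A ^ n) y) := by
    intro x y
    have key : (A ^ (2 * n + 1)) x = (A ^ n) (A ((A ^ n) x)) := by
      have : A ^ (2 * n + 1) = A ^ n * (A * A ^ n) := by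
        rw [← pow_succ', ← pow_add]; ring_nf
      rw [this]; rfl
    rw [key, hmove n (A ((A ^ n) x)) y, map_add]
    exact (hA ((A ^ n) x) ((A ^ n) y)).symm
  refine ⟨main, fun hQ => ?_⟩
  ext x
  apply hnd.1
  intro y
  rw [main x y, map_add]
  have := hQ (x + y)
  rw [map_add] at this
  rw [this, hQ, hQ]
  simp
end

section
/- Let k be a field of characteristic ≠ 2, V a graded symplectic vector space V = ⊕_i V_i with an s-good grading, and Q ∈ Q(V)_2 a quadratic form with A = A_Q satisfying A(V_i) ⊆ V_{i+2} and Q|_{V_i} = 0 for i ≠ −1. Then Q ∈ Q(V)_2^0 (i.e., A^n : V_{−n} → V_n is an isomorphism for every even n ≥ 0, A^{(n−1)/2} : V_{−n} → V_{−1} is injective for every odd n ≥ 1, and Q restricted to A^{(n−1)/2}(V_{−n}) is nondegenerate) if and only if A^n : V_{−n} → V_n is an isomorphism for every n ≥ 0. -/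
/-!
Write `polar Q x y = B (A x) y`. Since `polar Q` is symmetric and `B` alternating, `A` is
skew-adjoint for `B`, so for `n = 2m + 1` and `x, y ∈ V_{-n}` we get
`polar Q (A^m x) (A^m y) = ± B (A^n x) y`. As `B` pairs `V_n` perfectly with `V_{-n}`, the
radical of `polar Q` on `A^m V_{-n}` is exactly `A^m (ker A^n ∩ V_{-n})`, and `Q` vanishes on it
when `2 ≠ 0`; this turns the odd conditions defining `Q(V)₂⁰` into injectivity of `A^n` on
`V_{-n}`. Finally `dim V_{-n} = dim V_n`, so injectivity of `A^n : V_{-n} → V_n` already makes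
it an isomorphism.
-/

def SGood (k V : Type*) [Field k] [AddCommGroup V] [Module k V]
    (B : LinearMap.BilinForm k V) (Vg : ℤ → Submodule k V) : Prop :=
  DirectSum.IsInternal Vg ∧
  (∀ i : ℤ, 0 ≤ i →
    Module.finrank k (Vg (-i)) = Module.finrank k (Vg i) ∧
    Module.finrank k (Vg (-i - 2)) ≤ Module.finrank k (Vg (-i))) ∧
  (∀ i : ℤ, Even i → Even (Module.finrank k (Vg i))) ∧
  (∀ i j : ℤ, i + j ≠ 0 → ∀ x ∈ Vg i, ∀ y ∈ Vg j, B x y = 0)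

open Module (finrank)

section Endomorphism

variable {R M : Type*} [CommRing R] [AddCommGroup M] [Module R M]
  {B : LinearMap.BilinForm R M} {A : Module.End R M}

theorem LinearMap.BilinForm.IsAlt.isSkewAdjoint_of_polar_eq {Q : QuadraticForm R M}
    (halt : B.IsAlt) (hA : ∀ x y, QuadraticMap.polar Q x y = B (A x) y) :
    LinearMap.IsSkewAdjoint B A := fun x y => by
  rw [← hA, QuadraticMap.polar_comm, hA, Pi.neg_apply, map_neg, halt.neg_eq]

theorem LinearMap.IsSkewAdjoint.apply_pow (hA : LinearMap.IsSkewAdjoint B A) (j : ℕ) (x y : M) :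
    B x ((A ^ j) y) = (-1) ^ j * B ((A ^ j) x) y := by
  have hskew : ∀ u v, B u (A v) = -B (A u) v := fun u v => by
    rw [hA u v, Pi.neg_apply, map_neg, neg_neg]
  induction j generalizing y with
  | zero => simp
  | succ j ih =>
    have hx : (A ^ (j + 1)) x = A ((A ^ j) x) := by rw [pow_succ', Module.End.mul_apply]
    rw [hx, pow_succ, Module.End.mul_apply, ih, hskew]
    ring

theorem polar_pow_apply_pow_apply {Q : QuadraticForm R M} (halt : B.IsAlt)
    (hA : ∀ x y, QuadraticMap.polar Q x y = B (A x) y) (m : ℕ) (x y : M) :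
    QuadraticMap.polar Q ((A ^ m) x) ((A ^ m) y) = (-1) ^ m * B ((A ^ (2 * m + 1)) x) y := by
  rw [hA, (halt.isSkewAdjoint_of_polar_eq hA).apply_pow, ← Module.End.mul_apply,
    ← Module.End.mul_apply, ← pow_succ, ← pow_add, show m + 1 + m = 2 * m + 1 by ring]

end Endomorphism

section Graded

variable {ι R M : Type*} [CommRing R] [AddCommGroup M] [Module R M] {Vg : ι → Submodule R M}

theorem pow_apply_mem_of_forall_apply_mem [AddMonoid ι] {A : Module.End R M} {d : ι}
    (hA : ∀ i, ∀ x ∈ Vg i, A x ∈ Vg (i + d)) (j : ℕ) {i : ι} {x : M} (hx : x ∈ Vg i) :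
    (A ^ j) x ∈ Vg (i + j • d) := by
  induction j with
  | zero => simpa using hx
  | succ j ih =>
    rw [pow_succ', Module.End.mul_apply, succ_nsmul, ← add_assoc]
    exact hA _ _ ih

theorem eq_zero_of_forall_mem_neg_apply_eq_zero [AddGroup ι] {B : LinearMap.BilinForm R M}
    (hB : B.SeparatingLeft) (hspan : ⨆ i, Vg i = ⊤)
    (horth : ∀ i j, i + j ≠ 0 → ∀ x ∈ Vg i, ∀ y ∈ Vg j, B x y = 0)
    {n : ι} {x : M} (hx : x ∈ Vg n) (h : ∀ y ∈ Vg (-n), B x y = 0) : x = 0 := by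
  have hker : ⨆ i, Vg i ≤ LinearMap.ker (B x) := iSup_le fun j z hz => by
    rw [LinearMap.mem_ker]
    by_cases hj : n + j = 0
    · exact h z (neg_eq_of_add_eq_zero_right hj ▸ hz)
    · exact horth n j hj x hx z hz
  exact hB x fun y => hker (hspan ▸ Submodule.mem_top)

end Graded

theorem surjOn_of_injOn_of_finrank_eq {K V W : Type*} [Field K] [AddCommGroup V] [Module K V]
    [AddCommGroup W] [Module K W] {p : Submodule K V} {q : Submodule K W}
    [FiniteDimensional K p] [FiniteDimensional K q] (f : V →ₗ[K] W)
    (hmaps : ∀ x ∈ p, f x ∈ q) (hrank : finrank K p = finrank K q)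
    (hinj : ∀ x ∈ p, f x = 0 → x = 0) : ∀ y ∈ q, ∃ x ∈ p, f x = y := by
  have hg : Function.Injective (f.restrict hmaps) := by
    refine (injective_iff_map_eq_zero _).mpr fun a ha => Subtype.ext ?_
    exact hinj a a.2 (congrArg Subtype.val ha)
  intro y hy
  obtain ⟨x, hx⟩ :=
    (LinearMap.injective_iff_surjective_of_finrank_eq_finrank hrank).mp hg ⟨y, hy⟩
  exact ⟨x, x.2, congrArg Subtype.val hx⟩

section OddDegree

variable {K V : Type*} [Field K] [AddCommGroup V] [Module K V]
  {B : LinearMap.BilinForm K V} {Q : QuadraticForm K V} {A : Module.End K V}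
  {p : Submodule K V} {m : ℕ}

theorem injOn_pow_odd_of_polar_nondegenerateOn (hchar : (2 : K) ≠ 0) (halt : B.IsAlt)
    (hA : ∀ x y, QuadraticMap.polar Q x y = B (A x) y)
    (hinj : ∀ x ∈ p, (A ^ m) x = 0 → x = 0)
    (hnd : ∀ w ∈ ⇑(A ^ m) '' (p : Set V),
      (∀ w' ∈ ⇑(A ^ m) '' (p : Set V), QuadraticMap.polar Q w w' = 0) → Q w = 0 → w = 0) :
    ∀ x ∈ p, (A ^ (2 * m + 1)) x = 0 → x = 0 := by
  intro x hx hx0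
  have horth : ∀ w' ∈ ⇑(A ^ m) '' (p : Set V), QuadraticMap.polar Q ((A ^ m) x) w' = 0 := by
    rintro _ ⟨y, -, rfl⟩
    rw [polar_pow_apply_pow_apply halt hA, hx0, map_zero, LinearMap.zero_apply, mul_zero]
  have hQ : Q ((A ^ m) x) = 0 := by
    have h2 := horth _ ⟨x, hx, rfl⟩
    rw [QuadraticMap.polar_self, nsmul_eq_mul, Nat.cast_ofNat] at h2
    exact (mul_eq_zero.mp h2).resolve_left hchar
  exact hinj x hx (hnd _ ⟨x, hx, rfl⟩ horth hQ)

theorem polar_nondegenerateOn_of_injOn_pow_odd {q : Submodule K V} (halt : B.IsAlt)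
    (hA : ∀ x y, QuadraticMap.polar Q x y = B (A x) y)
    (hinj : ∀ x ∈ p, (A ^ (2 * m + 1)) x = 0 → x = 0)
    (hmaps : ∀ x ∈ p, (A ^ (2 * m + 1)) x ∈ q)
    (hsep : ∀ z ∈ q, (∀ y ∈ p, B z y = 0) → z = 0) :
    ∀ w ∈ ⇑(A ^ m) '' (p : Set V),
      (∀ w' ∈ ⇑(A ^ m) '' (p : Set V), QuadraticMap.polar Q w w' = 0) →
        Q w = 0 → w = 0 := by
  rintro _ ⟨x, hx, rfl⟩ horth -
  have hpair : ∀ y ∈ p, B ((A ^ (2 * m + 1)) x) y = 0 := fun y hy => by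
    have h := horth _ ⟨y, hy, rfl⟩
    rw [polar_pow_apply_pow_apply halt hA] at h
    exact (mul_eq_zero.mp h).resolve_left (pow_ne_zero _ (neg_ne_zero.mpr one_ne_zero))
  rw [hinj x hx (hsep _ (hmaps x hx) hpair), map_zero]

end OddDegree

theorem QV20_iff_all_iso_char_ne_two_general
    (k V : Type*) [Field k] [AddCommGroup V] [Module k V] [FiniteDimensional k V]
    (hchar : (2 : k) ≠ 0)
    (B : LinearMap.BilinForm k V) (halt : B.IsAlt) (hnd : B.Nondegenerate)
    (Vg : ℤ → Submodule k V) (hg : SGood k V B Vg)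
    (Q : QuadraticForm k V) (A : Module.End k V)
    (hA : ∀ x y : V, Q (x + y) - Q x - Q y = B (A x) y)
    (hA2 : ∀ i : ℤ, ∀ x ∈ Vg i, A x ∈ Vg (i + 2)) :
    ((∀ n : ℕ, Even n →
        (∀ x ∈ Vg (-(n : ℤ)), (A ^ n) x = 0 → x = 0) ∧
        (∀ y ∈ Vg (n : ℤ), ∃ x ∈ Vg (-(n : ℤ)), (A ^ n) x = y)) ∧
      (∀ n : ℕ, Odd n →
        (∀ x ∈ Vg (-(n : ℤ)), (A ^ ((n - 1) / 2)) x = 0 → x = 0) ∧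
        (∀ w ∈ ⇑(A ^ ((n - 1) / 2)) '' (Vg (-(n : ℤ)) : Set V),
          (∀ w' ∈ ⇑(A ^ ((n - 1) / 2)) '' (Vg (-(n : ℤ)) : Set V),
            QuadraticMap.polar Q w w' = 0) → Q w = 0 → w = 0)))
    ↔ (∀ n : ℕ,
        (∀ x ∈ Vg (-(n : ℤ)), (A ^ n) x = 0 → x = 0) ∧
        (∀ y ∈ Vg (n : ℤ), ∃ x ∈ Vg (-(n : ℤ)), (A ^ n) x = y)) := by
  obtain ⟨hint, hdim, -, horth⟩ := hg
  have hpolar : ∀ x y, QuadraticMap.polar Q x y = B (A x) y := hA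
  have hmaps : ∀ n : ℕ, ∀ x ∈ Vg (-(n : ℤ)), (A ^ n) x ∈ Vg n := fun n x hx => by
    convert pow_apply_mem_of_forall_apply_mem hA2 n hx using 2
    rw [nsmul_eq_mul]
    ring
  have hsurj (n : ℕ) (hinj : ∀ x ∈ Vg (-(n : ℤ)), (A ^ n) x = 0 → x = 0) :
      ∀ y ∈ Vg n, ∃ x ∈ Vg (-(n : ℤ)), (A ^ n) x = y :=
    surjOn_of_injOn_of_finrank_eq _ (hmaps n) (hdim n n.cast_nonneg).1 hinj
  have hsep (n : ℤ) : ∀ z ∈ Vg n, (∀ y ∈ Vg (-n), B z y = 0) → z = 0 := fun _ hz =>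
    eq_zero_of_forall_mem_neg_apply_eq_zero hnd.1 hint.submodule_iSup_eq_top horth hz
  have hhalf (m : ℕ) : (2 * m + 1 - 1) / 2 = m := by omega
  constructor
  · rintro ⟨heven, hodd⟩ n
    rcases n.even_or_odd with hn | ⟨m, rfl⟩
    · exact heven n hn
    · obtain ⟨hinj, hrad⟩ := hodd _ (odd_two_mul_add_one m)
      rw [hhalf] at hinj hrad
      have hinj' := injOn_pow_odd_of_polar_nondegenerateOn hchar halt hpolar hinj hrad
      exact ⟨hinj', hsurj _ hinj'⟩
  · intro hiso
    refine ⟨fun n _ => hiso n, ?_⟩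
    rintro _ ⟨m, rfl⟩
    rw [hhalf]
    refine ⟨fun x hx hx0 => (hiso _).1 x hx ?_,
      polar_nondegenerateOn_of_injOn_pow_odd halt hpolar (hiso _).1 (hmaps _) (hsep _)⟩
    rw [show 2 * m + 1 = (m + 1) + m by ring, pow_add, Module.End.mul_apply, hx0, map_zero]

/-- char ≠ 2, `(V, B)` symplectic with an `s`-good grading, and
`Q ∈ Q(V)₂`, i.e. `A = A_Q` maps `V_i` into `V_{i+2}` and `Q` vanishes on `V_i`
for `i ≠ -1`.  Then `Q ∈ Q(V)₂⁰` (the conditions on the left of the iff) iff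
`A^n : V_{-n} → V_n` is an isomorphism for every `n ≥ 0`. -/
theorem QV20_iff_all_iso_char_ne_two
    (k V : Type*) [Field k] [AddCommGroup V] [Module k V] [FiniteDimensional k V]
    (hchar : (2 : k) ≠ 0)
    (B : LinearMap.BilinForm k V) (halt : B.IsAlt) (hnd : B.Nondegenerate)
    (Vg : ℤ → Submodule k V) (hg : SGood k V B Vg)
    (Q : QuadraticForm k V) (A : Module.End k V)
    (hA : ∀ x y : V, Q (x + y) - Q x - Q y = B (A x) y)
    (hA2 : ∀ i : ℤ, ∀ x ∈ Vg i, A x ∈ Vg (i + 2))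
    (hQ0 : ∀ i : ℤ, i ≠ -1 → ∀ x ∈ Vg i, Q x = 0) :
    ((∀ n : ℕ, Even n →
        (∀ x ∈ Vg (-(n : ℤ)), (A ^ n) x = 0 → x = 0) ∧
        (∀ y ∈ Vg (n : ℤ), ∃ x ∈ Vg (-(n : ℤ)), (A ^ n) x = y)) ∧
      (∀ n : ℕ, Odd n →
        (∀ x ∈ Vg (-(n : ℤ)), (A ^ ((n - 1) / 2)) x = 0 → x = 0) ∧
        (∀ w ∈ ⇑(A ^ ((n - 1) / 2)) '' (Vg (-(n : ℤ)) : Set V),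
          (∀ w' ∈ ⇑(A ^ ((n - 1) / 2)) '' (Vg (-(n : ℤ)) : Set V),
            QuadraticMap.polar Q w w' = 0) → Q w = 0 → w = 0)))
    ↔ (∀ n : ℕ,
        (∀ x ∈ Vg (-(n : ℤ)), (A ^ n) x = 0 → x = 0) ∧
        (∀ y ∈ Vg (n : ℤ), ∃ x ∈ Vg (-(n : ℤ)), (A ^ n) x = y)) :=
  QV20_iff_all_iso_char_ne_two_general k V hchar B halt hnd Vg hg Q A hA hA2
end

section
/- Let V be a symplectic vector space with an s-good grading V = ⊕_i V_i over a field k, and let Q be a quadratic form such that A = A_Q satisfies A(V_{≥i}) ⊆ V_{≥i+2} for all i and Q vanishes on V_{≥0}. If n ≥ 0 satisfies 2n ≥ m, where m is the largest integer with V_m ≠ 0, then Q(A^n x) = 0 for all x ∈ V. -/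
/-- `(V, B)` symplectic with `s`-good grading of top degree `m`
(`V_m ≠ 0`, `V_i = 0` for `i > m`), `Q` a quadratic form such that `A = A_Q`
maps `V_{≥ i}` into `V_{≥ i+2}` and `Q` vanishes on `V_{≥ 0}`.  If `2n ≥ m` then
`Q (A^n x) = 0` for all `x ∈ V`. -/
theorem Q_comp_pow_eq_zero
    (k V : Type*) [Field k] [AddCommGroup V] [Module k V] [FiniteDimensional k V]
    (B : LinearMap.BilinForm k V) (halt : B.IsAlt) (hnd : B.Nondegenerate)
    (Vg : ℤ → Submodule k V) (hg : SGood k V B Vg)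
    (m : ℕ) (hm : Vg (m : ℤ) ≠ ⊥) (hm' : ∀ i : ℤ, (m : ℤ) < i → Vg i = ⊥)
    (Q : QuadraticForm k V) (A : Module.End k V)
    (hA : ∀ x y : V, Q (x + y) - Q x - Q y = B (A x) y)
    (hA2 : ∀ i : ℤ, ∀ x ∈ (⨆ j ≥ i, Vg j), A x ∈ (⨆ j ≥ i + 2, Vg j))
    (hQ0 : ∀ x ∈ (⨆ j ≥ (0 : ℤ), Vg j), Q x = 0)
    (n : ℕ) (hn : (m : ℤ) ≤ 2 * n) :
    ∀ x : V, Q ((A ^ n) x) = 0 := by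
  obtain ⟨hint, hdim, -, -⟩ := hg
  intro x
  have hbot : ∀ j : ℤ, j < -(m : ℤ) → Vg j = ⊥ := by
    intro j hj
    have h1 : (0 : ℤ) ≤ -j := by linarith
    have h2 := (hdim (-j) h1).1
    rw [neg_neg] at h2
    have h3 : Vg (-j) = ⊥ := hm' (-j) (by linarith)
    rw [← Submodule.finrank_eq_zero (R := k), h2, h3]
    simp
  have htop : (⨆ j ≥ (-(m : ℤ)), Vg j) = ⊤ := by
    rw [eq_top_iff, ← hint.submodule_iSup_eq_top]
    apply iSup_le
    intro j
    by_cases hj : -(m : ℤ) ≤ j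
    · exact le_iSup₂ (f := fun j (_ : -(m:ℤ) ≤ j) => Vg j) j hj
    · rw [hbot j (by omega)]; exact bot_le
  have key : ∀ t : ℕ, (A ^ t) x ∈ ⨆ j ≥ (-(m : ℤ) + 2 * t), Vg j := by
    intro t
    induction t with
    | zero =>
      simpa using htop ▸ (Submodule.mem_top : x ∈ ⊤)
    | succ t ih =>
      have h4 := hA2 (-(m : ℤ) + 2 * t) _ ih
      have heq : (-(m : ℤ) + 2 * ((t : ℤ) + 1)) = (-(m : ℤ) + 2 * t) + 2 := by ring
      have heq2 : ((A ^ (t + 1)) x : V) = A ((A ^ t) x) := by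
        rw [pow_succ']; rfl
      rw [heq2]
      push_cast
      rw [heq]
      exact h4
  have hx := key n
  have hmono : (⨆ j ≥ (-(m : ℤ) + 2 * n), Vg j) ≤ ⨆ j ≥ (0 : ℤ), Vg j :=
    biSup_mono (fun j hj => by linarith)
  exact hQ0 _ (hmono hx)
end

section
/- Let V be a nonzero finite-dimensional vector space over a field of characteristic 2 with nondegenerate symplectic form, equipped with an s-good grading whose top nonzero degree is m ≥ 1, m even. Let Q̄ ∈ Q(V)_2^0 with Ā = A_{Q̄}. Then {x ∈ V : Ā^m x = 0} = V_{≥ −m+1}. -/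
/-- `Q ∈ Q(V)₂⁰`: `A = A_Q` shifts the grading by `2`, `Q` vanishes on `V_i` for
`i ≠ -1`, `A^n : V_{-n} → V_n` is bijective for even `n ≥ 0`, and for odd `n ≥ 1`
the map `A^{(n-1)/2} : V_{-n} → V_{-1}` is injective with `Q` nondegenerate on its
image (no nonzero vector of the image lies in the radical of the polar form of
`Q|_image` and has `Q`-value `0`). -/
def QV20 (k V : Type*) [Field k] [AddCommGroup V] [Module k V]
    (Vg : ℤ → Submodule k V) (Q : QuadraticForm k V) (A : Module.End k V) : Prop :=
  (∀ i : ℤ, ∀ x ∈ Vg i, A x ∈ Vg (i + 2)) ∧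
  (∀ i : ℤ, i ≠ -1 → ∀ x ∈ Vg i, Q x = 0) ∧
  (∀ n : ℕ, Even n →
    (∀ x ∈ Vg (-(n : ℤ)), (A ^ n) x = 0 → x = 0) ∧
    (∀ y ∈ Vg (n : ℤ), ∃ x ∈ Vg (-(n : ℤ)), (A ^ n) x = y)) ∧
  (∀ n : ℕ, Odd n →
    (∀ x ∈ Vg (-(n : ℤ)), (A ^ ((n - 1) / 2)) x = 0 → x = 0) ∧
    (∀ w ∈ ⇑(A ^ ((n - 1) / 2)) '' (Vg (-(n : ℤ)) : Set V),
      (∀ w' ∈ ⇑(A ^ ((n - 1) / 2)) '' (Vg (-(n : ℤ)) : Set V),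
        QuadraticMap.polar Q w w' = 0) → Q w = 0 → w = 0))

/-- char 2, `(V, B)` symplectic with `s`-good grading of top
degree `m ≥ 1`, `m` even, and `Q̄ ∈ Q(V)₂⁰` with `Ā = A_{Q̄}`.  Then
`{x : Ā^m x = 0} = V_{≥ -m+1}`. -/
theorem ker_pow_eq_filtration_even
    (k V : Type*) [Field k] [CharP k 2] [AddCommGroup V] [Module k V]
    [FiniteDimensional k V]
    (B : LinearMap.BilinForm k V) (halt : B.IsAlt) (hnd : B.Nondegenerate)
    (Vg : ℤ → Submodule k V) (hg : SGood k V B Vg)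
    (m : ℕ) (hm1 : 1 ≤ m) (hme : Even m)
    (hmtop : Vg (m : ℤ) ≠ ⊥) (hmbd : ∀ i : ℤ, (m : ℤ) < i → Vg i = ⊥)
    (Q : QuadraticForm k V) (A : Module.End k V)
    (hA : ∀ x y : V, Q (x + y) - Q x - Q y = B (A x) y)
    (hQ : QV20 k V Vg Q A) :
    {x : V | (A ^ m) x = 0}
      = ((⨆ j ≥ (-(m : ℤ) + 1), Vg j : Submodule k V) : Set V) := by
  obtain ⟨hint, hdim, -, -⟩ := hg
  obtain ⟨hshift, -, heven, -⟩ := hQ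
  set W : Submodule k V := ⨆ j ≥ (-(m : ℤ) + 1), Vg j with hWdef
  -- A^n maps Vg i into Vg (i + 2n)
  have hpow : ∀ n : ℕ, ∀ i : ℤ, ∀ x ∈ Vg i, (A ^ n) x ∈ Vg (i + 2 * n) := by
    intro n
    induction n with
    | zero => intro i x hx; simpa using hx
    | succ n ih =>
      intro i x hx
      have h1 := hshift (i + 2 * n) _ (ih i x hx)
      have h2 : i + 2 * ((n : ℤ) + 1) = (i + 2 * n) + 2 := by ring
      have h3 : (A ^ (n + 1)) x = A ((A ^ n) x) := by
        rw [pow_succ']; rfl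
      rw [h3]
      push_cast
      rw [h2]
      exact h1
  -- every Vg j with j < -m is trivial
  have hbot : ∀ j : ℤ, j < -(m : ℤ) → Vg j = ⊥ := by
    intro j hj
    have h0 : (0 : ℤ) ≤ -j := by omega
    have hd := (hdim (-j) h0).1
    rw [neg_neg] at hd
    have htopj : Vg (-j) = ⊥ := hmbd (-j) (by omega)
    rw [htopj] at hd
    simp only [finrank_bot] at hd
    exact Submodule.finrank_eq_zero.mp hd
  -- W is contained in the kernel
  have hWker : ∀ x ∈ W, (A ^ m) x = 0 := by
    have : W ≤ LinearMap.ker (A ^ m) := by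
      refine iSup_le fun j => iSup_le fun hj => ?_
      intro x hx
      have := hpow m j x hx
      rw [hmbd (j + 2 * m) (by omega)] at this
      simpa using this
    exact fun x hx => this hx
  -- V = Vg (-m) ⊔ W
  have hsup : Vg (-(m : ℤ)) ⊔ W = ⊤ := by
    refine le_antisymm le_top ?_
    rw [← hint.submodule_iSup_eq_top]
    refine iSup_le fun j => ?_
    rcases lt_trichotomy j (-(m : ℤ)) with h | h | h
    · rw [hbot j h]; exact bot_le
    · rw [h]; exact le_sup_left
    · have hj : -(m : ℤ) + 1 ≤ j := by omega
      exact le_trans (le_iSup₂_of_le j hj le_rfl) le_sup_right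
  ext x
  simp only [Set.mem_setOf_eq, SetLike.mem_coe]
  constructor
  · intro hx
    have hxt : x ∈ Vg (-(m : ℤ)) ⊔ W := by rw [hsup]; trivial
    obtain ⟨a, ha, w, hw, rfl⟩ := Submodule.mem_sup.mp hxt
    have hAa : (A ^ m) a = 0 := by
      have := hWker w hw
      have h0 : (A ^ m) a + (A ^ m) w = 0 := by rw [← map_add]; exact hx
      rw [this, add_zero] at h0
      exact h0
    have : a = 0 := (heven m hme).1 a ha hAa
    rw [this, zero_add]
    exact hw
  · exact hWker x
end

section
/- Let V be a finite-dimensional symplectic vector space over a field of characteristic 2 with an s-good grading whose top nonzero degree is m ≥ 1, m odd, and let Q̄ ∈ Q(V)_2^0 with Ā = A_{Q̄}. Then {x ∈ V : Ā^m x = 0 and Q̄(Ā^{(m−1)/2} x) = 0} = V_{≥ −m+1}. -/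
/-!
Write `m = 2c + 1`. Since `polar Q = B (A ·) ·` and `B` is alternating, `A` is skew-adjoint for
`B`, so `polar Q (Aᶜ a) (Aᶜ b) = ± B a (Aᵐ b)`. Hence `x ↦ Q (Aᶜ x)` is additive on `ker Aᵐ` and
`K = {x | Aᵐ x = 0 ∧ Q (Aᶜ x) = 0}` is a subspace. Degree bookkeeping shows that every `V_j` with
`j ≥ -m + 1` lies in `K`, and `V = V_{-m} ⊕ V_{≥ -m+1}` because the degrees below `-m` vanish by
the symmetry of dimensions. On `V_{-m} ∩ K` the same polar identity puts `Aᶜ v` in the radical of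
`Q` on `Aᶜ V_{-m}`, so the nondegeneracy condition forces `v = 0`.
-/

open QuadraticMap

namespace LinearMap

variable {R M N : Type*} [CommSemiring R] [AddCommMonoid M] [Module R M]
  [AddCommMonoid N] [Module R N] {B : M →ₗ[R] M →ₗ[R] N}

theorem IsAdjointPair.pow {f g : Module.End R M} (h : IsAdjointPair B B f g) (n : ℕ) :
    IsAdjointPair B B ⇑(f ^ n) ⇑(g ^ n) := by
  induction n with
  | zero => exact isAdjointPair_one
  | succ n ih => rw [pow_succ, pow_succ']; exact ih.mul h

end LinearMap

section SkewAdjoint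

variable {R M : Type*} [CommRing R] [AddCommGroup M] [Module R M]
  {Q : QuadraticForm R M} {B : LinearMap.BilinForm R M} {A : Module.End R M}

theorem isAdjointPair_neg_of_polar_eq (halt : B.IsAlt)
    (hA : ∀ x y, polar Q x y = B (A x) y) : LinearMap.IsAdjointPair B B A ⇑(-A) := by
  intro x y
  rw [← hA, polar_comm, hA, ← LinearMap.IsAlt.neg halt x (A y), LinearMap.neg_apply, map_neg]

theorem polar_pow_apply_eq_zero (halt : B.IsAlt) (hA : ∀ x y, polar Q x y = B (A x) y)
    {c : ℕ} (a : M) {b : M} (hb : (A ^ (2 * c + 1)) b = 0) :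
    polar Q ((A ^ c) a) ((A ^ c) b) = 0 := by
  have hAb : (A ^ (c + 1)) ((A ^ c) b) = 0 := by
    rw [← Module.End.mul_apply, ← pow_add, show c + 1 + c = 2 * c + 1 by ring, hb]
  rw [hA, ← Module.End.mul_apply, ← pow_succ', (isAdjointPair_neg_of_polar_eq halt hA).pow,
    neg_pow, Module.End.mul_apply, hAb, map_zero, map_zero]

def isotropicKernel (halt : B.IsAlt) (hA : ∀ x y, polar Q x y = B (A x) y) (c : ℕ) :
    Submodule R M where
  carrier := {x | (A ^ (2 * c + 1)) x = 0 ∧ Q ((A ^ c) x) = 0}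
  zero_mem' := by simp
  add_mem' := by
    rintro x y ⟨hx, hQx⟩ ⟨hy, hQy⟩
    refine ⟨by rw [map_add, hx, hy, add_zero], ?_⟩
    rw [map_add, QuadraticMap.map_add Q, hQx, hQy, polar_pow_apply_eq_zero halt hA x hy, add_zero,
      add_zero]
  smul_mem' := by
    rintro r x ⟨hx, hQx⟩
    exact ⟨by rw [map_smul, hx, smul_zero], by rw [map_smul, QuadraticMap.map_smul, hQx, smul_zero]⟩

theorem eq_zero_of_mem_isotropicKernel (halt : B.IsAlt) (hA : ∀ x y, polar Q x y = B (A x) y)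
    {c : ℕ} {W : Submodule R M}
    (hinj : ∀ x ∈ W, (A ^ c) x = 0 → x = 0)
    (hnd : ∀ w ∈ ⇑(A ^ c) '' (W : Set M),
      (∀ w' ∈ ⇑(A ^ c) '' (W : Set M), polar Q w w' = 0) → Q w = 0 → w = 0)
    {v : M} (hvW : v ∈ W) (hvK : v ∈ isotropicKernel halt hA c) : v = 0 := by
  refine hinj v hvW (hnd _ ⟨v, hvW, rfl⟩ ?_ hvK.2)
  rintro _ ⟨v', -, rfl⟩
  rw [polar_comm]
  exact polar_pow_apply_eq_zero halt hA v' hvK.1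

end SkewAdjoint

section Graded

variable {R M : Type*} [Semiring R] [AddCommMonoid M] [Module R M] {Vg : ℤ → Submodule R M}

theorem pow_apply_mem_of_shift {A : Module.End R M} {d : ℤ}
    (hshift : ∀ i, ∀ x ∈ Vg i, A x ∈ Vg (i + d)) (n : ℕ) {i : ℤ} {x : M} (hx : x ∈ Vg i) :
    (A ^ n) x ∈ Vg (i + n * d) := by
  induction n with
  | zero => simpa using hx
  | succ n ih =>
    rw [pow_succ', Module.End.mul_apply]
    convert hshift _ _ ih using 2
    push_cast
    ring

theorem sup_iSup_ge_eq_top (htop : ⨆ j, Vg j = ⊤) {n : ℤ} (hlow : ∀ j < n, Vg j = ⊥) :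
    Vg n ⊔ ⨆ j ≥ n + 1, Vg j = ⊤ := by
  refine eq_top_iff.2 (htop ▸ iSup_le fun j => ?_)
  rcases lt_trichotomy j n with hj | rfl | hj
  · simp [hlow j hj]
  · exact le_sup_left
  · exact le_sup_of_le_right (le_iSup₂_of_le j (by omega : j ≥ n + 1) le_rfl)

end Graded

theorem eq_bot_of_lt_neg {k V : Type*} [DivisionRing k] [AddCommGroup V] [Module k V]
    [FiniteDimensional k V] {Vg : ℤ → Submodule k V}
    (hdim : ∀ i : ℤ, 0 ≤ i → Module.finrank k (Vg (-i)) = Module.finrank k (Vg i))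
    {n : ℕ} (hhigh : ∀ i : ℤ, (n : ℤ) < i → Vg i = ⊥) {j : ℤ} (hj : j < -(n : ℤ)) : Vg j = ⊥ := by
  apply Submodule.finrank_eq_zero.1
  rw [← neg_neg j, hdim (-j) (by omega), hhigh (-j) (by omega), finrank_bot]

theorem ker_pow_eq_filtration_odd_general
    (k V : Type*) [Field k] [AddCommGroup V] [Module k V]
    [FiniteDimensional k V]
    (B : LinearMap.BilinForm k V) (halt : B.IsAlt)
    (Vg : ℤ → Submodule k V) (hg : SGood k V B Vg)
    (m : ℕ) (hmo : Odd m)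
    (hmbd : ∀ i : ℤ, (m : ℤ) < i → Vg i = ⊥)
    (Q : QuadraticForm k V) (A : Module.End k V)
    (hA : ∀ x y : V, Q (x + y) - Q x - Q y = B (A x) y)
    (hQ : QV20 k V Vg Q A) :
    {x : V | (A ^ m) x = 0 ∧ Q ((A ^ ((m - 1) / 2)) x) = 0}
      = ((⨆ j ≥ (-(m : ℤ) + 1), Vg j : Submodule k V) : Set V) := by
  obtain ⟨hint, hdim, -, -⟩ := hg
  obtain ⟨hshift, hQvan, -, hodd⟩ := hQ
  obtain ⟨c, rfl⟩ := hmo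
  obtain ⟨hinj, hnd⟩ := hodd _ ⟨c, rfl⟩
  rw [show (2 * c + 1 - 1) / 2 = c by omega] at hinj hnd ⊢
  have hlow : ∀ j < -((2 * c + 1 : ℕ) : ℤ), Vg j = ⊥ := fun j hj =>
    eq_bot_of_lt_neg (fun i hi => (hdim i hi).1) hmbd hj
  have hle : ⨆ j ≥ -((2 * c + 1 : ℕ) : ℤ) + 1, Vg j ≤ isotropicKernel halt hA c := by
    refine iSup₂_le fun j hj y hy => ⟨?_, hQvan _ (by omega) _ (pow_apply_mem_of_shift hshift c hy)⟩
    have := pow_apply_mem_of_shift hshift (2 * c + 1) hy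
    rwa [hmbd _ (by push_cast; omega), Submodule.mem_bot] at this
  show (isotropicKernel halt hA c : Set V) = _
  refine congrArg _ (le_antisymm (fun x hx => ?_) hle)
  have hx' : x ∈ Vg (-((2 * c + 1 : ℕ) : ℤ)) ⊔ ⨆ j ≥ -((2 * c + 1 : ℕ) : ℤ) + 1, Vg j := by
    rw [sup_iSup_ge_eq_top hint.submodule_iSup_eq_top hlow]
    exact Submodule.mem_top
  obtain ⟨v, hv, s, hs, rfl⟩ := Submodule.mem_sup.1 hx'
  have hvK : v ∈ isotropicKernel halt hA c := by simpa using sub_mem hx (hle hs)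
  rwa [eq_zero_of_mem_isotropicKernel halt hA hinj hnd hv hvK, zero_add]

/-- char 2, `(V, B)` symplectic with `s`-good grading of top
degree `m ≥ 1`, `m` odd, and `Q̄ ∈ Q(V)₂⁰` with `Ā = A_{Q̄}`.  Then
`{x : Ā^m x = 0 and Q̄(Ā^{(m-1)/2} x) = 0} = V_{≥ -m+1}`. -/
theorem ker_pow_eq_filtration_odd
    (k V : Type*) [Field k] [CharP k 2] [AddCommGroup V] [Module k V]
    [FiniteDimensional k V]
    (B : LinearMap.BilinForm k V) (halt : B.IsAlt) (hnd : B.Nondegenerate)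
    (Vg : ℤ → Submodule k V) (hg : SGood k V B Vg)
    (m : ℕ) (hm1 : 1 ≤ m) (hmo : Odd m)
    (hmtop : Vg (m : ℤ) ≠ ⊥) (hmbd : ∀ i : ℤ, (m : ℤ) < i → Vg i = ⊥)
    (Q : QuadraticForm k V) (A : Module.End k V)
    (hA : ∀ x y : V, Q (x + y) - Q x - Q y = B (A x) y)
    (hQ : QV20 k V Vg Q A) :
    {x : V | (A ^ m) x = 0 ∧ Q ((A ^ ((m - 1) / 2)) x) = 0}
      = ((⨆ j ≥ (-(m : ℤ) + 1), Vg j : Submodule k V) : Set V) :=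
  ker_pow_eq_filtration_odd_general k V B halt Vg hg m hmo hmbd Q A hA hQ
end

section
/- Let V be a symplectic vector space over a field k with an s-good grading, and let Q ∈ Q(V)_2 be such that A = A_Q fails to be injective on V_{−i} → V_{−i+2} for some i ≥ 2. Then there exists B ∈ Sp(V) with Q∘B = Q which does not preserve the grading filtration (V_{≥j}); explicitly, choosing nonzero e_{−i} ∈ V_{−i} with Ae_{−i}=0 and nonzero e_{i−2} ∈ V_{i−2} with Ae_{i−2}=0, the transvection-type map B(Σ x_k) = Σ_{k≠−i,i−2} x_k + (x_{−i} + (e_{i−2},x_{−i+2})e_{−i}) + (x_{i−2} + (e_{−i},x_i)e_{i−2}) is symplectic and satisfies Q(B x) = Q(x) for all x. -/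
open Module

theorem LinearMap.BilinForm.IsAlt.transvection_apply_apply {R V : Type*} [CommRing R]
    [AddCommGroup V] [Module R V] {B : LinearMap.BilinForm R V} (hB : B.IsAlt) (e x y : V) :
    B (LinearMap.transvection (B e) e x) (LinearMap.transvection (B e) e y) = B x y := by
  have hxe : B x e = -B e x := (hB.neg_eq e x).symm
  simp only [LinearMap.transvection.apply, map_add, map_smul, LinearMap.add_apply,
    LinearMap.smul_apply, smul_eq_mul, hB e, hxe]
  ring

theorem QuadraticMap.map_add_smul_of_polar_eq_zero {R M N : Type*} [CommRing R]
    [AddCommGroup M] [Module R M] [AddCommGroup N] [Module R N] (Q : QuadraticMap R M N)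
    {e : M} (hQe : Q e = 0) (hpolar : ∀ x, polar Q x e = 0) (x : M) (c : R) :
    Q (x + c • e) = Q x := by
  rw [QuadraticMap.map_add Q, QuadraticMap.map_smul, polar_smul_right, hQe, hpolar]
  simp

theorem Submodule.exists_mem_apply_ne_zero_of_iSup_eq_top {R M N ι : Type*} [Semiring R]
    [AddCommMonoid M] [Module R M] [AddCommMonoid N] [Module R N] {p : ι → Submodule R M}
    (hp : iSup p = ⊤) {f : M →ₗ[R] N} (hf : f ≠ 0) (i : ι)
    (hfp : ∀ j ≠ i, ∀ y ∈ p j, f y = 0) : ∃ y ∈ p i, f y ≠ 0 := by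
  by_contra! hfi
  have hker : ∀ j, p j ≤ LinearMap.ker f := by
    intro j y hy
    rcases eq_or_ne j i with rfl | hj
    exacts [hfi y hy, hfp j hj y hy]
  exact hf (LinearMap.ker_eq_top.mp (top_unique (hp ▸ iSup_le hker)))

theorem iSupIndep.notMem_iSup_ge {R M ι : Type*} [Ring R] [AddCommGroup M] [Module R M]
    [LinearOrder ι] {p : ι → Submodule R M} (hp : iSupIndep p) {m j : ι} (hmj : m < j)
    {x : M} (hx : x ∈ p m) (hx0 : x ≠ 0) : x ∉ ⨆ l ≥ j, p l := fun hxj =>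
  hx0 <| Submodule.disjoint_def.mp
    (hp.disjoint_biSup (y := {l | j ≤ l}) (Set.notMem_ofPred_iff.mpr hmj.not_ge)) x hx hxj

theorem LinearMap.transvection_map_not_le {K V : Type*} [DivisionRing K] [AddCommGroup V]
    [Module K V] {S : Submodule K V} {f : Dual K V} {v y : V} (hy : y ∈ S) (hfy : f y ≠ 0)
    (hv : v ∉ S) : ¬ S.map (LinearMap.transvection f v) ≤ S := by
  intro hS
  have hty : y + f y • v ∈ S := hS ⟨y, hy, rfl⟩
  have hfyv : f y • v ∈ S := by simpa using S.sub_mem hty hy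
  exact hv ((S.smul_mem_iff hfy).mp hfyv)

theorem exists_symplectic_fixing_Q_not_preserving_filtration_general
    (k V : Type*) [Field k] [AddCommGroup V] [Module k V]
    (B : LinearMap.BilinForm k V) (halt : B.IsAlt) (hnd : B.Nondegenerate)
    (Vg : ℤ → Submodule k V) (hg : SGood k V B Vg)
    (Q : QuadraticForm k V) (A : Module.End k V)
    (hA : ∀ x y : V, Q (x + y) - Q x - Q y = B (A x) y)
    (hQ0 : ∀ i : ℤ, i ≠ -1 → ∀ x ∈ Vg i, Q x = 0)
    (i : ℤ) (hi : 2 ≤ i)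
    (hker : ∃ x ∈ Vg (-i), x ≠ 0 ∧ A x = 0) :
    ∃ g : V ≃ₗ[k] V,
      (∀ x y : V, B (g x) (g y) = B x y) ∧
      (∀ x : V, Q (g x) = Q x) ∧
      ∃ j : ℤ, Submodule.map g.toLinearMap (⨆ l ≥ j, Vg l) ≠ ⨆ l ≥ j, Vg l := by
  obtain ⟨hint, -, -, horth⟩ := hg
  obtain ⟨e, he, he0, hAe⟩ := hker
  refine ⟨LinearEquiv.transvection (halt e), halt.transvection_apply_apply e, fun x => ?_,
    1 - i, fun hmap => ?_⟩
  · have hpolar : ∀ x, QuadraticMap.polar Q x e = 0 := fun x => by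
      rw [QuadraticMap.polar_comm, QuadraticMap.polar, hA, hAe, map_zero, LinearMap.zero_apply]
    exact Q.map_add_smul_of_polar_eq_zero (hQ0 (-i) (by omega) e he) hpolar x _
  · have hBe : B e ≠ 0 := fun h => he0 (hnd.1 e fun z => by rw [h, LinearMap.zero_apply])
    obtain ⟨y, hy, hBy⟩ := Submodule.exists_mem_apply_ne_zero_of_iSup_eq_top
      hint.submodule_iSup_eq_top hBe i fun j hj => horth (-i) j (by omega) e he
    have hyS : y ∈ ⨆ l ≥ 1 - i, Vg l :=
      Submodule.mem_iSup_of_mem i (Submodule.mem_iSup_of_mem (by omega) hy)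
    exact LinearMap.transvection_map_not_le hyS hBy
      (hint.submodule_iSupIndep.notMem_iSup_ge (by omega) he he0) hmap.le

/-- `(V, B)` symplectic with `s`-good grading, `Q ∈ Q(V)₂`
(i.e. `A = A_Q` shifts the grading by `2` and `Q` vanishes on `V_i` for
`i ≠ -1`) such that `A : V_{-i} → V_{-i+2}` is not injective for some `i ≥ 2`.
Then there is a symplectic automorphism `g` of `V` with `Q ∘ g = Q` which does
not preserve the filtration `(V_{≥ j})`. -/
theorem exists_symplectic_fixing_Q_not_preserving_filtration
    (k V : Type*) [Field k] [AddCommGroup V] [Module k V]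
    [FiniteDimensional k V]
    (B : LinearMap.BilinForm k V) (halt : B.IsAlt) (hnd : B.Nondegenerate)
    (Vg : ℤ → Submodule k V) (hg : SGood k V B Vg)
    (Q : QuadraticForm k V) (A : Module.End k V)
    (hA : ∀ x y : V, Q (x + y) - Q x - Q y = B (A x) y)
    (hA2 : ∀ i : ℤ, ∀ x ∈ Vg i, A x ∈ Vg (i + 2))
    (hQ0 : ∀ i : ℤ, i ≠ -1 → ∀ x ∈ Vg i, Q x = 0)
    (i : ℤ) (hi : 2 ≤ i)
    (hker : ∃ x ∈ Vg (-i), x ≠ 0 ∧ A x = 0) :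
    ∃ g : V ≃ₗ[k] V,
      (∀ x y : V, B (g x) (g y) = B x y) ∧
      (∀ x : V, Q (g x) = Q x) ∧
      ∃ j : ℤ, Submodule.map g.toLinearMap (⨆ l ≥ j, Vg l) ≠ ⨆ l ≥ j, Vg l :=
  exists_symplectic_fixing_Q_not_preserving_filtration_general k V B halt hnd Vg hg Q A hA hQ0 i hi
    hker
end
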